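/- arXiv:2012.06794 — 5 statements merged into one kernel-verified Lean document; each statement's English description precedes it below -/
import Mathlib

section
/- For every cardinal κ ≥ 1, every real ε > 0 and every loop L : [0,1] → 𝔾𝕊_κ with L(0) = L(1) = ∘_κ, there exists a loop based at ∘_κ that is homotopic to L rel {0,1} and whose image has diameter at most ε. -/
noncomputable section

open Set

namespace Griffiths

/-- The one-fold Griffiths cone over the Hawaiian earring, as a subset of Euclidean 3-space:
the union over heights `r ∈ [0,1]` and `n ∈ ℕ` of the circle at height `r` with center
`(0, (1-r)/(n+3))` and radius `(1-r)/(n+3)` (the geodesic cone over the Hawaiian earring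
`𝔼 × {0}` with cone tip `(0,0,1)`). -/
def GS1set : Set (EuclideanSpace ℝ (Fin 3)) :=
  ⋃ r ∈ Set.Icc (0 : ℝ) 1, ⋃ n : ℕ,
    {x | x 0 ^ 2 + (x 1 - (1 - r) / (n + 3)) ^ 2 = ((1 - r) / (n + 3)) ^ 2 ∧ x 2 = r}

lemma zero_mem_GS1set : (0 : EuclideanSpace ℝ (Fin 3)) ∈ GS1set := by
  have h0 : (0:ℝ) ∈ Set.Icc (0:ℝ) 1 := by norm_num
  refine Set.mem_biUnion h0 (Set.mem_iUnion.2 ⟨0, ?_, ?_⟩) <;> simp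

/-- The relation identifying the copies of the origin `(0,0,0)` in the disjoint union of
`ι`-many copies of `𝔾𝕊₁`. -/
def wedgeSetoid (ι : Type) : Setoid (Σ _ : ι, GS1set) where
  r x y := x = y ∨ (x.2.val = 0 ∧ y.2.val = 0)
  iseqv := by
    constructor
    · intro x; exact Or.inl rfl
    · rintro x y (rfl | h); exacts [Or.inl rfl, Or.inr ⟨h.2, h.1⟩]
    · rintro x y z (rfl | h) (rfl | h')
      · exact Or.inl rfl
      · exact Or.inr h'
      · exact Or.inr h
      · exact Or.inr ⟨h.1, h'.2⟩

/-- The `ι`-fold Griffiths space: the wedge of `ι`-many copies of `𝔾𝕊₁` at the point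
`(0,0,0)`. -/
def GS (ι : Type) : Type := Quotient (wedgeSetoid ι)

/-- The wedge metric on representatives. -/
def preDist {ι : Type} (x y : Σ _ : ι, GS1set) : ℝ :=
  @ite _ (x.1 = y.1) (Classical.dec _)
    (dist (x.2.val) (y.2.val))
    (dist (x.2.val) 0 + dist (0 : EuclideanSpace ℝ (Fin 3)) (y.2.val))

lemma preDist_wd {ι : Type} (x y x' y' : Σ _ : ι, GS1set)
    (hx : (wedgeSetoid ι).r x x') (hy : (wedgeSetoid ι).r y y') :
    preDist x y = preDist x' y' := by
  classical
  have key : ∀ a b c : Σ _ : ι, GS1set, a.2.val = 0 → b.2.val = 0 →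
      preDist a c = preDist b c := by
    intro a b c ha hb
    unfold preDist
    by_cases h1 : a.1 = c.1 <;> by_cases h2 : b.1 = c.1 <;>
      simp [h1, h2, ha, hb, dist_comm]
  have symmkey : ∀ a c d : Σ _ : ι, GS1set, c.2.val = 0 → d.2.val = 0 →
      preDist a c = preDist a d := by
    intro a c d hc hd
    unfold preDist
    by_cases h1 : a.1 = c.1 <;> by_cases h2 : a.1 = d.1 <;>
      simp [h1, h2, hc, hd]
  rcases hx with rfl | hx
  · rcases hy with rfl | hy
    · rfl
    · exact symmkey _ _ _ hy.1 hy.2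
  · rcases hy with rfl | hy
    · exact key _ _ _ hx.1 hx.2
    · rw [key _ x' _ hx.1 hx.2, symmkey _ _ _ hy.1 hy.2]

instance GSMetric (ι : Type) : MetricSpace (GS ι) where
  dist := Quotient.lift₂ preDist fun a₁ b₁ a₂ b₂ h₁ h₂ => preDist_wd a₁ b₁ a₂ b₂ h₁ h₂
  dist_self := by
    rintro ⟨x⟩
    show preDist x x = 0
    simp [preDist]
  dist_comm := by
    rintro ⟨x⟩ ⟨y⟩
    show preDist x y = preDist y x
    unfold preDist
    by_cases h : x.1 = y.1
    · rw [if_pos h, if_pos h.symm, dist_comm]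
    · have h' : ¬ y.1 = x.1 := fun hh => h hh.symm
      rw [if_neg h, if_neg h', dist_comm (x.2.val) (0 : EuclideanSpace ℝ (Fin 3)),
        dist_comm ((0 : EuclideanSpace ℝ (Fin 3))) (y.2.val)]
      ring
  dist_triangle := by
    rintro ⟨x⟩ ⟨y⟩ ⟨z⟩
    show preDist x z ≤ preDist x y + preDist y z
    unfold preDist
    have t3 := dist_triangle (x.2.val) (y.2.val) (z.2.val)
    have txy0 := dist_triangle (x.2.val) (y.2.val) (0 : EuclideanSpace ℝ (Fin 3))
    have t0yz := dist_triangle (0 : EuclideanSpace ℝ (Fin 3)) (y.2.val) (z.2.val)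
    have tx0z := dist_triangle (x.2.val) (0 : EuclideanSpace ℝ (Fin 3)) (z.2.val)
    have h0y : (0:ℝ) ≤ dist (0 : EuclideanSpace ℝ (Fin 3)) (y.2.val) := dist_nonneg
    have hy0 : (0:ℝ) ≤ dist (y.2.val) (0 : EuclideanSpace ℝ (Fin 3)) := dist_nonneg
    have hcy : dist (y.2.val) (0 : EuclideanSpace ℝ (Fin 3))
        = dist (0 : EuclideanSpace ℝ (Fin 3)) (y.2.val) := dist_comm _ _
    split_ifs with h1 h2 h3 h3' h2' h3'' h3'''
    all_goals
      first
        | exact absurd (‹x.1 = y.1›.trans ‹y.1 = z.1›) ‹¬ x.1 = z.1›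
        | exact absurd (‹x.1 = y.1›.symm.trans ‹x.1 = z.1›) ‹¬ y.1 = z.1›
        | exact absurd (‹x.1 = z.1›.trans ‹y.1 = z.1›.symm) ‹¬ x.1 = y.1›
        | linarith
  eq_of_dist_eq_zero := by
    rintro ⟨x⟩ ⟨y⟩ h
    replace h : preDist x y = 0 := h
    unfold preDist at h
    apply Quotient.sound
    by_cases hxy : x.1 = y.1
    · rw [if_pos hxy] at h
      left
      obtain ⟨a, xv⟩ := x
      obtain ⟨b, yv⟩ := y
      cases hxy
      have : xv = yv := Subtype.ext (by simpa using dist_eq_zero.mp h)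
      rw [this]
    · rw [if_neg hxy] at h
      right
      have hx0 : (0:ℝ) ≤ dist (x.2.val) (0 : EuclideanSpace ℝ (Fin 3)) := dist_nonneg
      have h0y : (0:ℝ) ≤ dist (0 : EuclideanSpace ℝ (Fin 3)) (y.2.val) := dist_nonneg
      have h1 : dist (x.2.val) (0 : EuclideanSpace ℝ (Fin 3)) = 0 := by linarith
      have h2 : dist (0 : EuclideanSpace ℝ (Fin 3)) (y.2.val) = 0 := by linarith
      exact ⟨dist_eq_zero.mp h1, (dist_eq_zero.mp h2).symm⟩

/-- The wedge point `∘` of the `ι`-fold Griffiths space. -/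
def basept {ι : Type} (a : ι) : GS ι := ⟦⟨a, ⟨0, zero_mem_GS1set⟩⟩⟧

lemma basept_eq {ι : Type} (a b : ι) : basept a = basept b :=
  Quotient.sound (Or.inr ⟨rfl, rfl⟩)

end Griffiths

/-!
Let `Z = L⁻¹(∘)`, a closed subset of `[0, 1]` containing `0` and `1`. On each interval
`(c, b)` complementary to `Z` the loop avoids the wedge point, so by connectedness it stays in
a single cone `X_α`. The cones are contractible (though not rel the wedge point: already the
wedge of two of them is not simply connected), hence the subloop `L|[c, b]` is null-homotopic
rel endpoints and can be collapsed to `∘`. The compact set where `L` is at distance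
`≥ ε / 2` from `∘` is covered by finitely many of these intervals; collapsing them leaves a
homotopic loop inside the closed `ε / 2`-ball about `∘`.
-/

open unitInterval

theorem Set.Icc.convexComb_projIcc_div_sub {a b : ℝ} {c d t : Icc a b} (hct : c < t)
    (htd : t < d) :
    Icc.convexComb c d (projIcc 0 1 zero_le_one (((t : ℝ) - c) / ((d : ℝ) - c))) = t := by
  have hct' : (c : ℝ) < t := hct
  have htd' : (t : ℝ) < d := htd
  have hdc : (0 : ℝ) < d - c := by linarith
  have hmem : ((t : ℝ) - c) / (d - c) ∈ Icc (0 : ℝ) 1 :=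
    ⟨div_nonneg (by linarith) hdc.le, (div_le_one hdc).2 (by linarith)⟩
  ext
  rw [Icc.coe_convexComb, projIcc_of_mem _ hmem]
  field_simp
  ring

theorem IsClosed.exists_Ioo_disjoint {α : Type*} [ConditionallyCompleteLinearOrder α]
    [TopologicalSpace α] [OrderTopology α] {Z : Set α} (hZ : IsClosed Z) {s : α} (hs : s ∉ Z)
    (hlo : ∃ z ∈ Z, z ≤ s) (hhi : ∃ z ∈ Z, s ≤ z) :
    ∃ c ∈ Z, ∃ b ∈ Z, s ∈ Ioo c b ∧ Disjoint (Ioo c b) Z := by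
  obtain ⟨z₀, hz₀, hz₀s⟩ := hlo
  obtain ⟨z₁, hz₁, hsz₁⟩ := hhi
  have hbdd : BddAbove (Z ∩ Iic s) := ⟨s, fun _ h => h.2⟩
  have hbdd' : BddBelow (Z ∩ Ici s) := ⟨s, fun _ h => h.2⟩
  have hc := (hZ.inter isClosed_Iic).csSup_mem ⟨z₀, hz₀, hz₀s⟩ hbdd
  have hb := (hZ.inter isClosed_Ici).csInf_mem ⟨z₁, hz₁, hsz₁⟩ hbdd'
  refine ⟨_, hc.1, _, hb.1, ⟨hc.2.lt_of_ne (ne_of_mem_of_not_mem hc.1 hs),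
    hb.2.lt_of_ne' (ne_of_mem_of_not_mem hb.1 hs)⟩, disjoint_left.2 ?_⟩
  rintro t ⟨htc, htb⟩ htZ
  rcases le_total t s with h | h
  · exact htc.not_ge (le_csSup hbdd ⟨htZ, h⟩)
  · exact htb.not_ge (csInf_le hbdd' ⟨htZ, h⟩)

namespace Path

variable {X : Type*} [TopologicalSpace X] {x y p : X}

theorem homotopic_of_range_subset {A : Set X} [SimplyConnectedSpace A] {γ₁ γ₂ : Path x y}
    (h₁ : range γ₁ ⊆ A) (h₂ : range γ₂ ⊆ A) : γ₁.Homotopic γ₂ := by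
  let lift (γ : Path x y) (h : range γ ⊆ A) :
      Path (⟨x, γ.source ▸ h ⟨0, rfl⟩⟩ : A) ⟨y, γ.target ▸ h ⟨1, rfl⟩⟩ :=
    { toFun := fun t => ⟨γ t, h ⟨t, rfl⟩⟩
      continuous_toFun := γ.continuous.subtype_mk _
      source' := Subtype.ext γ.source
      target' := Subtype.ext γ.target }
  exact (SimplyConnectedSpace.paths_homotopic (lift γ₁ h₁) (lift γ₂ h₂)).map
    ⟨Subtype.val, continuous_subtype_val⟩

theorem exists_homotopic_collapse_subloop (γ : Path x y) {c b : I} (hcb : c < b)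
    (hc : γ c = p) (hb : γ b = p)
    (hnull : ((γ.subpath c b).cast hc.symm hb.symm).Homotopic (Path.refl p)) :
    ∃ γ' : Path x y, γ.Homotopic γ' ∧ (∀ t ∉ Ioo c b, γ' t = γ t) ∧
      ∀ t ∈ Icc c b, γ' t = p := by
  obtain ⟨F⟩ := hnull
  let φ : I → I := fun t => projIcc 0 1 zero_le_one (((t : ℝ) - c) / ((b : ℝ) - c))
  have hφ : Continuous φ := by unfold φ; fun_prop
  have hbc : (b : ℝ) - c ≠ 0 := sub_ne_zero.2 (Subtype.coe_injective.ne hcb.ne')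
  have hφc : φ c = 0 := by simp [φ]
  have hφb : φ b = 1 := by simp [φ, div_self hbc]
  let H : I × I → X := fun q =>
    if q.2 ≤ c then γ q.2 else if b ≤ q.2 then γ q.2 else F (q.1, φ q.2)
  have hH : Continuous H := by
    refine Continuous.if_le (by fun_prop) ?_ continuous_snd continuous_const ?_
    · refine Continuous.if_le (by fun_prop) (F.continuous.comp (by fun_prop)) continuous_const
        continuous_snd ?_
      rintro q (hq : b = q.2)
      rw [← hq, hφb, F.target, hb]
    · rintro q (hq : q.2 = c)
      simp only [hq, not_le.2 hcb, if_false, hφc, F.source, hc]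
  have hH_out : ∀ s, ∀ t ∉ Ioo c b, H (s, t) = γ t := by
    intro s t ht
    simp only [H]
    split_ifs with h₁ h₂
    · rfl
    · rfl
    · exact absurd ⟨not_le.1 h₁, not_le.1 h₂⟩ ht
  have hH_zero : ∀ t, H (0, t) = γ t := by
    intro t
    by_cases ht : t ∈ Ioo c b
    · simp only [H, not_le.2 ht.1, not_le.2 ht.2, if_false, F.apply_zero]
      exact congrArg γ (Icc.convexComb_projIcc_div_sub ht.1 ht.2)
    · exact hH_out 0 t ht
  have hH_one : ∀ t ∈ Icc c b, H (1, t) = p := by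
    intro t ht
    simp only [H]
    split_ifs with h₁ h₂
    · rw [le_antisymm h₁ ht.1, hc]
    · rw [le_antisymm ht.2 h₂, hb]
    · rw [F.apply_one]; rfl
  have hH_ends : ∀ s, ∀ t ∈ ({0, 1} : Set I), H (s, t) = γ t := by
    rintro s t (rfl | rfl)
    exacts [hH_out s 0 fun h => not_lt.2 (nonneg c) h.1,
      hH_out s 1 fun h => not_lt.2 (le_one b) h.2]
  let γ' : Path x y :=
    { toFun := fun t => H (1, t)
      continuous_toFun := by fun_prop
      source' := (hH_ends 1 0 (by simp)).trans γ.source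
      target' := (hH_ends 1 1 (by simp)).trans γ.target }
  let G : γ.Homotopy γ' :=
    { toFun := H
      continuous_toFun := hH
      map_zero_left := hH_zero
      map_one_left := fun _ => rfl
      prop' := fun s t ht => by simpa using hH_ends s t ht }
  exact ⟨γ', ⟨G⟩, hH_out 1, hH_one⟩

theorem exists_homotopic_collapse_of_image_subset {A : Set X} [SimplyConnectedSpace A]
    (γ : Path x y) {c b : I} (hcb : c < b) (hc : γ c = p) (hb : γ b = p)
    (hA : γ '' Icc c b ⊆ A) :
    ∃ γ' : Path x y, γ.Homotopic γ' ∧ (∀ t, γ' t = γ t ∨ γ' t = p) ∧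
      ∀ t ∈ Icc c b, γ' t = p := by
  have hp : p ∈ A := hc ▸ hA (mem_image_of_mem γ (left_mem_Icc.2 hcb.le))
  have hnull : ((γ.subpath c b).cast hc.symm hb.symm).Homotopic (Path.refl p) :=
    homotopic_of_range_subset (A := A)
      (by rwa [Path.cast_coe, γ.range_subpath_of_le c b hcb.le])
      (by rintro _ ⟨t, rfl⟩; exact hp)
  obtain ⟨γ', hγγ', hout, hin⟩ := γ.exists_homotopic_collapse_subloop hcb hc hb hnull
  refine ⟨γ', hγγ', fun t => ?_, hin⟩
  by_cases ht : t ∈ Ioo c b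
  · exact Or.inr (hin t (Ioo_subset_Icc_self ht))
  · exact Or.inl (hout t ht)

theorem exists_homotopic_collapse_finset {J : Type*} (s : Finset J) (c b : J → I)
    (A : J → Set X) [∀ i, SimplyConnectedSpace (A i)] (γ : Path x y)
    (hcb : ∀ i ∈ s, c i < b i) (hc : ∀ i ∈ s, γ (c i) = p) (hb : ∀ i ∈ s, γ (b i) = p)
    (hA : ∀ i ∈ s, γ '' Icc (c i) (b i) ⊆ A i) :
    ∃ γ' : Path x y, γ.Homotopic γ' ∧ (∀ t, γ' t = γ t ∨ γ' t = p) ∧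
      ∀ i ∈ s, ∀ t ∈ Icc (c i) (b i), γ' t = p := by
  classical
  induction s using Finset.induction_on with
  | empty => exact ⟨γ, .refl γ, fun _ => .inl rfl, by simp⟩
  | insert i s _ ih =>
    simp only [Finset.mem_insert, forall_eq_or_imp] at hcb hc hb hA
    obtain ⟨γ₁, hγγ₁, hγ₁, hγ₁s⟩ := ih hcb.2 hc.2 hb.2 hA.2
    have hp : p ∈ A i := hc.1 ▸ hA.1 (mem_image_of_mem γ (left_mem_Icc.2 hcb.1.le))
    have hγ₁_eq : ∀ t, γ t = p → γ₁ t = p := fun t ht => (hγ₁ t).elim (· ▸ ht) id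
    obtain ⟨γ₂, hγ₁γ₂, hγ₂, hγ₂i⟩ :=
      γ₁.exists_homotopic_collapse_of_image_subset (A := A i) hcb.1 (hγ₁_eq _ hc.1)
        (hγ₁_eq _ hb.1) (by
        rintro _ ⟨t, ht, rfl⟩
        rcases hγ₁ t with h | h
        · exact h ▸ hA.1 (mem_image_of_mem γ ht)
        · exact h ▸ hp)
    refine ⟨γ₂, hγγ₁.trans hγ₁γ₂, fun t => ?_, ?_⟩
    · rcases hγ₂ t with h | h
      · exact h ▸ hγ₁ t
      · exact .inr h
    · refine (Finset.forall_mem_insert _ _ _).2 ⟨hγ₂i, fun j hj t ht => ?_⟩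
      rcases hγ₂ t with h | h
      · exact h ▸ hγ₁s j hj t ht
      · exact h

end Path

namespace Griffiths

def origin : GS1set := ⟨0, zero_mem_GS1set⟩

theorem starConvex_GS1set : StarConvex ℝ (EuclideanSpace.single 2 1) GS1set := by
  intro y hy u v hu hv huv
  simp only [GS1set, mem_iUnion, mem_ofPred_eq] at hy ⊢
  obtain ⟨r, ⟨hr₀, hr₁⟩, n, hcirc, hy₂⟩ := hy
  refine ⟨u + v * r, ⟨by positivity, by nlinarith⟩, n, ?_, ?_⟩
  · rw [show 1 - (u + v * r) = v * (1 - r) by linear_combination -huv]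
    simp only [Fin.isValue, PiLp.add_apply, PiLp.smul_apply, ne_eq, Fin.reduceEq,
      not_false_eq_true, PiLp.single_eq_of_ne, smul_eq_mul, mul_zero, zero_add]
    linear_combination v ^ 2 * hcirc
  · simp [hy₂]

instance : ContractibleSpace GS1set :=
  starConvex_GS1set.contractibleSpace ⟨0, zero_mem_GS1set⟩

variable {ι : Type}

def incl (α : ι) (x : GS1set) : GS ι := Quotient.mk (wedgeSetoid ι) ⟨α, x⟩

theorem isometry_incl (α : ι) : Isometry (incl α) :=
  Isometry.of_dist_eq fun x y => by
    show preDist _ _ = _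
    simp [preDist, Subtype.dist_eq]

theorem incl_origin (α a : ι) : incl α origin = basept a := basept_eq α a

instance (α : ι) : ContractibleSpace (range (incl α)) :=
  (isometry_incl α).isEmbedding.toHomeomorph.symm.contractibleSpace

open Classical in
def proj (α : ι) : GS ι → GS1set :=
  Quotient.lift (fun u => if u.1 = α then u.2 else origin) <| by
    rintro u v (rfl | ⟨hu, hv⟩)
    · rfl
    · apply Subtype.ext
      split_ifs <;> simp [origin, hu, hv]

theorem proj_incl_self (α : ι) (x : GS1set) : proj α (incl α x) = x := by
  simp [proj, incl]

theorem proj_incl_of_ne {α β : ι} (h : β ≠ α) (x : GS1set) :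
    proj α (incl β x) = origin := by
  simp [proj, incl, h]

theorem dist_proj_le (α : ι) (p q : GS ι) : dist (proj α p) (proj α q) ≤ dist p q := by
  induction p using Quotient.inductionOn with | h u => ?_
  induction q using Quotient.inductionOn with | h v => ?_
  show _ ≤ preDist u v
  have := dist_triangle (u.2 : EuclideanSpace ℝ (Fin 3)) 0 v.2
  simp only [proj, Quotient.lift_mk, preDist]
  split_ifs <;> simp_all [Subtype.dist_eq, origin, dist_comm]
  positivity

theorem continuous_proj (α : ι) : Continuous (proj α) :=
  (LipschitzWith.mk_one (dist_proj_le α)).continuous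

def puncturedCopy (α : ι) : Set (GS ι) := {p | proj α p ≠ origin}

theorem isOpen_puncturedCopy (α : ι) : IsOpen (puncturedCopy α) :=
  isOpen_ne_fun (continuous_proj α) continuous_const

theorem puncturedCopy_subset_range_incl (α : ι) : puncturedCopy α ⊆ range (incl α) := by
  rintro ⟨β, x⟩ hp
  obtain rfl : β = α := by_contra fun h => hp (proj_incl_of_ne h x)
  exact ⟨x, rfl⟩

theorem exists_mem_puncturedCopy {a : ι} {p : GS ι} (hp : p ≠ basept a) :
    ∃ α, p ∈ puncturedCopy α := by
  induction p using Quotient.inductionOn with | h u => ?_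
  refine ⟨u.1, fun hu => hp ?_⟩
  change proj u.1 (incl u.1 u.2) = origin at hu
  rw [proj_incl_self] at hu
  rw [← incl_origin u.1 a, ← hu]
  rfl

theorem disjoint_puncturedCopy {α β : ι} (h : α ≠ β) :
    Disjoint (puncturedCopy α) (puncturedCopy β) := by
  refine disjoint_left.2 fun p hα hβ => h ?_
  obtain ⟨x, rfl⟩ := puncturedCopy_subset_range_incl α hα
  by_contra h'
  exact hβ (proj_incl_of_ne h' x)

theorem exists_subset_range_incl_of_isPreconnected {S : Set (GS ι)} (hS : IsPreconnected S)
    {a : ι} (hbase : basept a ∉ S) : ∃ α, S ⊆ range (incl α) := by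
  rcases S.eq_empty_or_nonempty with rfl | ⟨p, hp⟩
  · exact ⟨a, empty_subset _⟩
  obtain ⟨α, hα⟩ := exists_mem_puncturedCopy (ne_of_mem_of_not_mem hp hbase)
  have hcover : S ⊆ puncturedCopy α ∪ ⋃ β ∈ {β | β ≠ α}, puncturedCopy β := by
    intro q hq
    obtain ⟨β, hβ⟩ := exists_mem_puncturedCopy (ne_of_mem_of_not_mem hq hbase)
    by_cases h : β = α
    · exact .inl (h ▸ hβ)
    · exact .inr (mem_biUnion h hβ)
  refine ⟨α, (hS.subset_left_of_subset_union (isOpen_puncturedCopy α)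
    (isOpen_biUnion fun β _ => isOpen_puncturedCopy β)
    (disjoint_iUnion₂_right.2 fun β hβ => disjoint_puncturedCopy (Ne.symm hβ)) hcover
    ⟨p, hp, hα⟩).trans (puncturedCopy_subset_range_incl α)⟩

theorem exists_excursion {a : ι} (L : Path (basept a) (basept a)) {s : I}
    (hs : L s ≠ basept a) :
    ∃ c b : I, s ∈ Ioo c b ∧ L c = basept a ∧ L b = basept a ∧
      ∃ α, L '' Icc c b ⊆ range (incl α) := by
  obtain ⟨c, hc, b, hb, hscb, hdisj⟩ :=
    (isClosed_singleton.preimage L.continuous).exists_Ioo_disjoint hs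
      ⟨0, L.source, nonneg s⟩ ⟨1, L.target, le_one s⟩
  obtain ⟨α, hα⟩ := exists_subset_range_incl_of_isPreconnected
    (isPreconnected_Ioo.image L L.continuous.continuousOn)
    (a := a) fun ⟨t, ht, hLt⟩ => disjoint_left.1 hdisj ht hLt
  refine ⟨c, b, hscb, hc, hb, α, ?_⟩
  rintro _ ⟨t, ⟨hct, htb⟩, rfl⟩
  rcases hct.eq_or_lt with rfl | hct
  · exact ⟨origin, (incl_origin α a).trans hc.symm⟩
  rcases htb.eq_or_lt with rfl | htb
  · exact ⟨origin, (incl_origin α a).trans hb.symm⟩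
  exact hα ⟨t, ⟨hct, htb⟩, rfl⟩

theorem exists_homotopic_range_subset_closedBall {a : ι} (L : Path (basept a) (basept a))
    {r : ℝ} (hr : 0 < r) :
    ∃ L' : Path (basept a) (basept a), L.Homotopic L' ∧
      range L' ⊆ Metric.closedBall (basept a) r := by
  let K : Set I := {s | r ≤ dist (L s) (basept a)}
  have hK : IsCompact K := (isClosed_le continuous_const (by fun_prop)).isCompact
  have hK_ne : ∀ s ∈ K, L s ≠ basept a := fun s hs h => by
    simp only [K, mem_ofPred_eq, h, dist_self] at hs
    linarith
  choose c b hscb hc hb α hα using fun s : K => exists_excursion L (hK_ne s s.2)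
  obtain ⟨T, hT⟩ := hK.elim_finite_subcover (fun s => {t | t ∈ Ioo (c s) (b s)})
    (fun s => isOpen_Ioo.preimage continuous_id) fun s hs => mem_iUnion.2 ⟨⟨s, hs⟩, hscb _⟩
  obtain ⟨L', hLL', hL'L, hL'T⟩ := L.exists_homotopic_collapse_finset T c b
    (fun s => range (incl (α s))) (fun s _ => (hscb s).1.trans (hscb s).2)
    (fun s _ => hc s) (fun s _ => hb s) (fun s _ => hα s)
  refine ⟨L', hLL', ?_⟩
  rintro _ ⟨t, rfl⟩
  rw [Metric.mem_closedBall]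
  by_cases htK : t ∈ K
  · obtain ⟨s, hsT, hts⟩ := mem_iUnion₂.1 (hT htK)
    rw [hL'T s hsT t (Ioo_subset_Icc_self hts), dist_self]
    exact hr.le
  · rcases hL'L t with h | h
    · rw [h]
      exact (not_le.1 htK).le
    · rw [h, dist_self]
      exact hr.le

end Griffiths

open Griffiths in
/-- **Lemma.** For every cardinal `κ ≥ 1` (the `κ`-fold Griffiths space being realized as
`GS ι` for a nonempty type `ι`), every `ε > 0` and every loop `L` based at the wedge point
`∘_κ`, there is a loop homotopic to `L` rel `{0,1}` whose image has diameter at most `ε`. -/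
theorem loops_homotopic_to_small_loops
    (ι : Type) (a : ι) (ε : ℝ) (hε : 0 < ε)
    (L : Path (Griffiths.basept a) (Griffiths.basept a)) :
    ∃ L' : Path (Griffiths.basept a) (Griffiths.basept a),
      Path.Homotopic L L' ∧ Metric.diam (Set.range ⇑L') ≤ ε := by
  obtain ⟨L', hLL', hball⟩ := exists_homotopic_range_subset_closedBall L (half_pos hε)
  refine ⟨L', hLL', ?_⟩
  calc Metric.diam (range L') ≤ 2 * (ε / 2) :=
        Metric.diam_le_of_subset_closedBall (half_pos hε).le hball
    _ = ε := by ring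
end
end

section
/- The space 𝔾𝕊₁ ∖ {(0,0,1)} strongly deformation retracts onto the copy 𝔼 × {0} of the Hawaiian earring: there is a continuous map h : (𝔾𝕊₁ ∖ {(0,0,1)}) × [0,1] → 𝔾𝕊₁ ∖ {(0,0,1)} with h(x,0) = x for all x, h(x,1) ∈ 𝔼 × {0} for all x, and h(e,s) = e for all e ∈ 𝔼 × {0} and all s ∈ [0,1]. -/
/-! Removing the tip, every point of `𝔾𝕊₁` lies at a height `t < 1`, and the homothety centred at
the tip with ratio `(1 - t (1 - s)) / (1 - t)` moves it to height `t (1 - s)`. Since `𝔾𝕊₁` is a cone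
with apex the tip, these homotheties stay inside it, depend continuously on the point while `t < 1`,
are the identity at `s = 0` and on the base `t = 0`, and at `s = 1` land in the base `𝔼 × {0}`. -/

noncomputable section

namespace Griffiths

/-- The cone tip `(0,0,1)` of `𝔾𝕊₁`. -/
def coneTip : EuclideanSpace ℝ (Fin 3) := WithLp.toLp 2 (fun i : Fin 3 => if i = 2 then (1 : ℝ) else 0)

/-- The copy `𝔼 × {0}` of the Hawaiian earring at the base of the cone `𝔾𝕊₁`,
as a subset of `ℝ³`. -/
def earringBase : Set (EuclideanSpace ℝ (Fin 3)) :=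
  ⋃ n : ℕ, {x | x 0 ^ 2 + (x 1 - 1 / (n + 3)) ^ 2 = (1 / (n + 3)) ^ 2 ∧ x 2 = 0}

end Griffiths

section RadialHomotopy

variable {E : Type*} [AddCommGroup E] [Module ℝ E] [TopologicalSpace E]

/-- The homothety centred at `v` that moves the height `f x` to `f x * (1 - s)`, when `f v = 1`. -/
def radialHomotopy (v : E) (f : E →L[ℝ] ℝ) (x : E) (s : ℝ) : E :=
  AffineMap.lineMap v x ((1 - f x * (1 - s)) / (1 - f x))

variable {v : E} {f : E →L[ℝ] ℝ} {x : E} {s : ℝ}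

theorem map_radialHomotopy (hv : f v = 1) (hx : f x ≠ 1) :
    f (radialHomotopy v f x s) = f x * (1 - s) := by
  have : 1 - f x ≠ 0 := sub_ne_zero.mpr hx.symm
  simp only [radialHomotopy, AffineMap.lineMap_apply_module, map_add, map_smul, smul_eq_mul, hv]
  field_simp
  ring

theorem radialHomotopy_zero (hx : f x ≠ 1) : radialHomotopy v f x 0 = x := by
  have : 1 - f x ≠ 0 := sub_ne_zero.mpr hx.symm
  simp [radialHomotopy, div_self this]

theorem radialHomotopy_of_map_eq_zero (hx : f x = 0) : radialHomotopy v f x s = x := by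
  simp [radialHomotopy, hx]

variable [IsTopologicalAddGroup E] [ContinuousSMul ℝ E]

theorem continuousOn_radialHomotopy :
    ContinuousOn (fun p : E × ℝ => radialHomotopy v f p.1 p.2) {p | f p.1 ≠ 1} := by
  unfold radialHomotopy
  refine continuousOn_const.lineMap continuousOn_fst (ContinuousOn.div ?_ ?_ ?_)
  · fun_prop
  · fun_prop
  · intro p hp
    exact sub_ne_zero.mpr (Ne.symm hp)

theorem exists_strongDeformationRetraction_of_cone {C : Set E} (hv : f v = 1)
    (hC_nonneg : ∀ x ∈ C, 0 ≤ f x) (hC_lt : ∀ x ∈ C, x ≠ v → f x < 1)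
    (hC_lineMap : ∀ x ∈ C, ∀ c : ℝ, 1 ≤ c → c * (1 - f x) ≤ 1 → AffineMap.lineMap v x c ∈ C) :
    ∃ h : (↥(C \ {v}) × ↥(Set.Icc (0:ℝ) 1)) → ↥(C \ {v}),
      Continuous h ∧
      (∀ x, h (x, ⟨0, by norm_num⟩) = x) ∧
      (∀ x, (h (x, ⟨1, by norm_num⟩)).val ∈ C ∩ f ⁻¹' {0}) ∧
      (∀ x s, x.val ∈ C ∩ f ⁻¹' {0} → h (x, s) = x) := by
  have hlt (x : ↥(C \ {v})) : f x < 1 := hC_lt x x.2.1 x.2.2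
  have hmem (x : ↥(C \ {v})) (s : ↥(Set.Icc (0:ℝ) 1)) : radialHomotopy v f x s ∈ C \ {v} := by
    have hx₀ := hC_nonneg x x.2.1
    have hx₁ := hlt x
    have hs₀ := s.2.1
    have hs₁ := s.2.2
    have hratio_ge : 1 ≤ (1 - f x * (1 - s)) / (1 - f x) := by
      rw [one_le_div (by linarith)]
      nlinarith
    have hratio_mul : (1 - f x * (1 - s)) / (1 - f x) * (1 - f x) ≤ 1 := by
      rw [div_mul_cancel₀ _ (by linarith)]
      nlinarith
    have hheight : f (radialHomotopy v f x s) < 1 := by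
      rw [map_radialHomotopy hv hx₁.ne]
      nlinarith
    refine ⟨hC_lineMap x x.2.1 _ hratio_ge hratio_mul, fun heq => hheight.ne ?_⟩
    rw [Set.mem_singleton_iff.mp heq, hv]
  refine ⟨fun p => ⟨radialHomotopy v f p.1 p.2, hmem p.1 p.2⟩, ?_, ?_, ?_, ?_⟩
  · refine Continuous.subtype_mk (continuousOn_radialHomotopy.comp_continuous
      (f := fun p : ↥(C \ {v}) × ↥(Set.Icc (0:ℝ) 1) => ((p.1 : E), (p.2 : ℝ))) (by fun_prop)
      fun p => (hlt p.1).ne) _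
  · exact fun x => Subtype.ext (radialHomotopy_zero (hlt x).ne)
  · intro x
    refine ⟨(hmem x _).1, ?_⟩
    simp [map_radialHomotopy hv (hlt x).ne]
  · exact fun x s hx => Subtype.ext (radialHomotopy_of_map_eq_zero hx.2)

end RadialHomotopy

namespace Griffiths

theorem mem_GS1set_iff {x : EuclideanSpace ℝ (Fin 3)} :
    x ∈ GS1set ↔ 0 ≤ x 2 ∧ x 2 ≤ 1 ∧ ∃ n : ℕ,
      x 0 ^ 2 + (x 1 - (1 - x 2) / (n + 3)) ^ 2 = ((1 - x 2) / (n + 3)) ^ 2 := by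
  simp only [GS1set, Set.mem_iUnion, Set.mem_ofPred_eq, Set.mem_Icc, exists_prop]
  constructor
  · rintro ⟨r, hr, n, hn, rfl⟩
    exact ⟨hr.1, hr.2, n, hn⟩
  · rintro ⟨h0, h1, n, hn⟩
    exact ⟨x 2, ⟨h0, h1⟩, n, hn, rfl⟩

theorem eq_coneTip_of_mem_GS1set {x : EuclideanSpace ℝ (Fin 3)} (hx : x ∈ GS1set)
    (h2 : x 2 = 1) : x = coneTip := by
  obtain ⟨-, -, n, hn⟩ := mem_GS1set_iff.mp hx
  simp only [h2, sub_self, zero_div, sub_zero, ne_eq, OfNat.ofNat_ne_zero, not_false_eq_true,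
    zero_pow] at hn
  have h0 : x 0 = 0 := by nlinarith [sq_nonneg (x 0), sq_nonneg (x 1)]
  have h1 : x 1 = 0 := by nlinarith [sq_nonneg (x 0), sq_nonneg (x 1)]
  ext i
  fin_cases i <;> simp [coneTip, h0, h1, h2]

theorem lineMap_coneTip_mem_GS1set {x : EuclideanSpace ℝ (Fin 3)} (hx : x ∈ GS1set) {c : ℝ}
    (hc₀ : 0 ≤ c) (hc₁ : c * (1 - x 2) ≤ 1) : AffineMap.lineMap coneTip x c ∈ GS1set := by
  obtain ⟨hx₀, hx₁, n, hn⟩ := mem_GS1set_iff.mp hx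
  set y := AffineMap.lineMap coneTip x c
  have hy (i : Fin 3) : y i = c * (x i - coneTip i) + coneTip i := by
    simp [y, AffineMap.lineMap_apply_module']
  have hy₀ : y 0 = c * x 0 := by simp [hy, coneTip]
  have hy₁ : y 1 = c * x 1 := by simp [hy, coneTip]
  have hy₂ : y 2 = c * (x 2 - 1) + 1 := by simp [hy, coneTip]
  refine mem_GS1set_iff.mpr ⟨by linarith, by nlinarith, n, ?_⟩
  rw [hy₀, hy₁, hy₂]
  linear_combination c ^ 2 * hn

theorem earringBase_eq_GS1set_inter :
    earringBase = GS1set ∩ EuclideanSpace.proj (2 : Fin 3) ⁻¹' {0} := by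
  ext x
  simp only [earringBase, Set.mem_iUnion, Set.mem_ofPred_eq, Set.mem_inter_iff, mem_GS1set_iff,
    Set.mem_preimage, Set.mem_singleton_iff, PiLp.proj_apply]
  constructor
  · rintro ⟨n, hn, h2⟩
    exact ⟨⟨h2.ge, by simp [h2], n, by simpa [h2] using hn⟩, h2⟩
  · rintro ⟨⟨-, -, n, hn⟩, h2⟩
    exact ⟨n, by simpa [h2] using hn, h2⟩

/-- **Lemma.** The space `𝔾𝕊₁ ∖ {(0,0,1)}` strongly deformation retracts onto the copy
`𝔼 × {0}` of the Hawaiian earring: there is a homotopy `h` starting at the identity, ending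
in `𝔼 × {0}`, and fixing `𝔼 × {0}` pointwise throughout. -/
theorem GS1_minus_tip_deformation_retract :
    ∃ h : (↥(GS1set \ {coneTip}) × ↥(Set.Icc (0:ℝ) 1)) → ↥(GS1set \ {coneTip}),
      Continuous h ∧
      (∀ x, h (x, ⟨0, by norm_num⟩) = x) ∧
      (∀ x, (h (x, ⟨1, by norm_num⟩)).val ∈ earringBase) ∧
      (∀ x s, x.val ∈ earringBase → h (x, s) = x) := by
  rw [earringBase_eq_GS1set_inter]
  refine exists_strongDeformationRetraction_of_cone (by simp [coneTip])
    (fun x hx => (mem_GS1set_iff.mp hx).1) (fun x hx hne => ?_)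
    (fun x hx c hc => lineMap_coneTip_mem_GS1set hx (by linarith))
  exact (mem_GS1set_iff.mp hx).2.1.lt_of_ne fun h2 => hne (eq_coneTip_of_mem_GS1set hx h2)

end Griffiths
end
end

section
/- Let Λ₀ be close in the totally ordered set Λ and let I ⊆ Λ be an interval. Then (i) ∝(I, Λ₀) ⊆ I and ∝(I, Λ₀) = ∝(∝(I, Λ₀), Λ₀); and (ii) I ∖ ∝(I, Λ₀) is the disjoint union of an initial subinterval and a terminal subinterval of I, each of which is finite (possibly empty). -/
/-- A subset `Λ₀` of a totally ordered set `Λ` is *close* in `Λ` if every infinite interval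
(order-convex subset) of `Λ` meets `Λ₀`. -/
def Close {Λ : Type*} [LinearOrder Λ] (Λ₀ : Set Λ) : Prop :=
  ∀ I : Set Λ, I.OrdConnected → I.Infinite → (I ∩ Λ₀).Nonempty

/-- `∝(I, Λ₀)`: the smallest interval of `Λ` including `I ∩ Λ₀`, i.e. the union of all
closed intervals `[a, b]` with endpoints `a ≤ b` in `I ∩ Λ₀`. -/
def propto {Λ : Type*} [LinearOrder Λ] (I Λ₀ : Set Λ) : Set Λ :=
  ⋃ (a ∈ I ∩ Λ₀) (b ∈ I ∩ Λ₀), Set.Icc a b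

/-- **Lemma (basic properties of `∝`).** Let `Λ₀` be close in `Λ` and `I ⊆ Λ` an interval.
Then (i) `∝(I,Λ₀) ⊆ I` and `∝(I,Λ₀) = ∝(∝(I,Λ₀),Λ₀)`, and (ii) `I ∖ ∝(I,Λ₀)` is the
disjoint union of a finite initial subinterval and a finite terminal subinterval of `I`. -/
theorem propto_subset_and_idem_and_small_complement
    {Λ : Type*} [LinearOrder Λ] (Λ₀ : Set Λ) (hclose : Close Λ₀)
    (I : Set Λ) (hI : I.OrdConnected) :
    (propto I Λ₀ ⊆ I ∧ propto I Λ₀ = propto (propto I Λ₀) Λ₀) ∧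
    ∃ I₀ I₁ : Set Λ,
      I₀ ⊆ I ∧ I₁ ⊆ I ∧ Disjoint I₀ I₁ ∧
      I \ propto I Λ₀ = I₀ ∪ I₁ ∧
      (∀ x ∈ I₀, ∀ y ∈ I, y ≤ x → y ∈ I₀) ∧
      (∀ x ∈ I₁, ∀ y ∈ I, x ≤ y → y ∈ I₁) ∧
      I₀.Finite ∧ I₁.Finite := by
  have hmemP : ∀ {x : Λ}, x ∈ propto I Λ₀ ↔
      ∃ a ∈ I ∩ Λ₀, ∃ b ∈ I ∩ Λ₀, a ≤ x ∧ x ≤ b := by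
    intro x
    simp only [propto, Set.mem_iUnion, Set.mem_Icc, exists_prop]
  have hPI : propto I Λ₀ ⊆ I := by
    intro x hx
    rw [hmemP] at hx
    obtain ⟨a, ha, b, hb, hax, hxb⟩ := hx
    exact hI.out ha.1 hb.1 ⟨hax, hxb⟩
  have hmem : ∀ a ∈ I ∩ Λ₀, a ∈ propto I Λ₀ := by
    intro a ha
    exact hmemP.mpr ⟨a, ha, a, ha, le_refl a, le_refl a⟩
  have hinter : propto I Λ₀ ∩ Λ₀ = I ∩ Λ₀ := by
    apply Set.Subset.antisymm
    · exact fun x hx => ⟨hPI hx.1, hx.2⟩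
    · exact fun x hx => ⟨hmem x hx, hx.2⟩
  refine ⟨⟨hPI, by rw [propto.eq_def (propto I Λ₀), hinter]; exact propto.eq_def ..⟩, ?_⟩
  by_cases hne : (I ∩ Λ₀).Nonempty
  · refine ⟨{x | x ∈ I ∧ ∀ a ∈ I ∩ Λ₀, x < a},
      {x | x ∈ I ∧ ∀ a ∈ I ∩ Λ₀, a < x}, fun x hx => hx.1, fun x hx => hx.1, ?_, ?_, ?_, ?_, ?_, ?_⟩
    · rw [Set.disjoint_left]
      rintro x ⟨-, h0⟩ ⟨-, h1⟩
      obtain ⟨a, ha⟩ := hne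
      exact absurd (h0 a ha) (not_lt.mpr (h1 a ha).le)
    · ext x
      constructor
      · rintro ⟨hxI, hxP⟩
        by_cases h : ∀ a ∈ I ∩ Λ₀, x < a
        · exact Or.inl ⟨hxI, h⟩
        · push_neg at h
          obtain ⟨a, ha, hax⟩ := h
          refine Or.inr ⟨hxI, fun b hb => ?_⟩
          by_contra hbx
          exact hxP (hmemP.mpr ⟨a, ha, b, hb, hax, not_lt.mp hbx⟩)
      · rintro (⟨hxI, h⟩ | ⟨hxI, h⟩)
        · refine ⟨hxI, fun hxP => ?_⟩
          obtain ⟨a, ha, b, hb, hax, hxb⟩ := hmemP.mp hxP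
          exact absurd hax (not_le.mpr (h a ha))
        · refine ⟨hxI, fun hxP => ?_⟩
          obtain ⟨a, ha, b, hb, hax, hxb⟩ := hmemP.mp hxP
          exact absurd hxb (not_le.mpr (h b hb))
    · rintro x ⟨hxI, hx⟩ y hyI hyx
      exact ⟨hyI, fun a ha => lt_of_le_of_lt hyx (hx a ha)⟩
    · rintro x ⟨hxI, hx⟩ y hyI hxy
      exact ⟨hyI, fun a ha => lt_of_lt_of_le (hx a ha) hxy⟩
    · by_contra hfin
      have hconn : Set.OrdConnected {x | x ∈ I ∧ ∀ a ∈ I ∩ Λ₀, x < a} := by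
        constructor
        rintro x ⟨hxI, hx⟩ y ⟨hyI, hy⟩ z ⟨hxz, hzy⟩
        exact ⟨hI.out hxI hyI ⟨hxz, hzy⟩, fun a ha => lt_of_le_of_lt hzy (hy a ha)⟩
      obtain ⟨z, ⟨hzI, hz⟩, hz0⟩ := hclose _ hconn hfin
      exact absurd (hz z ⟨hzI, hz0⟩) (lt_irrefl z)
    · by_contra hfin
      have hconn : Set.OrdConnected {x | x ∈ I ∧ ∀ a ∈ I ∩ Λ₀, a < x} := by
        constructor
        rintro x ⟨hxI, hx⟩ y ⟨hyI, hy⟩ z ⟨hxz, hzy⟩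
        exact ⟨hI.out hxI hyI ⟨hxz, hzy⟩, fun a ha => lt_of_lt_of_le (hx a ha) hxz⟩
      obtain ⟨z, ⟨hzI, hz⟩, hz0⟩ := hclose _ hconn hfin
      exact absurd (hz z ⟨hzI, hz0⟩) (lt_irrefl z)
  · have hIfin : I.Finite := by
      by_contra h
      exact hne (hclose I hI h)
    have hPempty : propto I Λ₀ = ∅ := by
      ext x
      simp only [Set.mem_empty_iff_false, iff_false]
      intro hx
      obtain ⟨a, ha, -⟩ := hmemP.mp hx
      exact hne ⟨a, ha⟩
    refine ⟨I, ∅, le_refl I, Set.empty_subset I, Set.disjoint_empty I, ?_,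
      fun x hx y hy _ => hy, fun x hx => absurd hx (Set.notMem_empty x),
      hIfin, Set.finite_empty⟩
    rw [hPempty, Set.diff_empty, Set.union_empty]
end

section
/- Let Λ₀ be a totally ordered set and let Λ₂ ⊆ Λ₁ ⊆ Λ₀, each subset carrying the induced order. If Close(Λ₁, Λ₀) and Close(Λ₂, Λ₁), then Close(Λ₂, Λ₀). -/
/-- `CloseIn A B` (for `A ⊆ B` subsets of a totally ordered set): every infinite interval of
`B` (in its induced order, i.e. every infinite subset of `B` that is order-convex within `B`)
has nonempty intersection with `A`. -/
def CloseIn {Λ : Type*} [LinearOrder Λ] (A B : Set Λ) : Prop :=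
  ∀ S : Set Λ, S ⊆ B → (∀ a ∈ S, ∀ c ∈ S, ∀ b ∈ B, a ≤ b → b ≤ c → b ∈ S) →
    S.Infinite → (S ∩ A).Nonempty

/-- **Lemma (transitivity of closeness).** If `Λ₂ ⊆ Λ₁ ⊆ Λ₀` (with the induced orders), and
`Λ₁` is close in `Λ₀` and `Λ₂` is close in `Λ₁`, then `Λ₂` is close in `Λ₀`. -/
theorem close_trans {Λ : Type*} [LinearOrder Λ]
    (Λ₀ Λ₁ Λ₂ : Set Λ) (h21 : Λ₂ ⊆ Λ₁) (h10 : Λ₁ ⊆ Λ₀)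
    (hc1 : CloseIn Λ₁ Λ₀) (hc2 : CloseIn Λ₂ Λ₁) :
    CloseIn Λ₂ Λ₀ := by
  classical
  intro S hS hconv hinf
  have hFsub : S ∩ Λ₁ ⊆ Λ₁ := Set.inter_subset_right
  have hFconv : ∀ a ∈ S ∩ Λ₁, ∀ c ∈ S ∩ Λ₁, ∀ b ∈ Λ₁, a ≤ b → b ≤ c → b ∈ S ∩ Λ₁ := by
    rintro a ⟨haS, _⟩ c ⟨hcS, _⟩ b hb hab hbc
    exact ⟨hconv a haS c hcS b (h10 hb) hab hbc, hb⟩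
  have hFinf : (S ∩ Λ₁).Infinite := by
    by_contra hfin
    rw [Set.not_infinite] at hfin
    haveI : Finite ↥(S ∩ Λ₁) := hfin
    haveI : Infinite ↥S := hinf.to_subtype
    set φ : ↥S → (↥(S ∩ Λ₁) → Bool) × (↥(S ∩ Λ₁) → Bool) :=
      fun x => (fun f => decide ((f : Λ) ≤ (x : Λ)), fun f => decide ((f : Λ) < (x : Λ)))
      with hφ
    obtain ⟨y, hy⟩ := Finite.exists_infinite_fiber φ
    set T : Set Λ := Subtype.val '' (φ ⁻¹' {y}) with hT
    have hTinf : T.Infinite := by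
      have : (φ ⁻¹' {y}).Infinite := Set.infinite_coe_iff.mp hy
      exact this.image (Set.injOn_of_injective Subtype.val_injective)
    have hTS : T ⊆ S := by
      rintro x ⟨⟨x, hxS⟩, _, rfl⟩; exact hxS
    -- membership data
    have hmem : ∀ x ∈ T, ∃ hx : x ∈ S,
        (∀ f : ↥(S ∩ Λ₁), y.1 f = decide ((f : Λ) ≤ x)) ∧
        (∀ f : ↥(S ∩ Λ₁), y.2 f = decide ((f : Λ) < x)) := by
      rintro x ⟨⟨x, hxS⟩, hx, rfl⟩
      refine ⟨hxS, fun f => ?_, fun f => ?_⟩ <;>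
        · simp only [Set.mem_preimage, Set.mem_singleton_iff, hφ] at hx
          rw [← hx]
    have hTconv : ∀ a ∈ T, ∀ c ∈ T, ∀ b ∈ Λ₀, a ≤ b → b ≤ c → b ∈ T := by
      intro a ha c hc b hb0 hab hbc
      obtain ⟨haS, ha1, ha2⟩ := hmem a ha
      obtain ⟨hcS, hc1', hc2'⟩ := hmem c hc
      have hbS : b ∈ S := hconv a haS c hcS b hb0 hab hbc
      refine ⟨⟨b, hbS⟩, ?_, rfl⟩
      simp only [Set.mem_preimage, Set.mem_singleton_iff, hφ]
      have e1 : ∀ f : ↥(S ∩ Λ₁), decide ((f : Λ) ≤ b) = y.1 f := by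
        intro f
        rw [ha1 f]
        refine decide_eq_decide.mpr ⟨fun h => ?_, fun h => le_trans h hab⟩
        by_contra hfa
        have : (f : Λ) ≤ c := le_trans h hbc
        have h1 : decide ((f : Λ) ≤ a) = true := by
          rw [← ha1 f, hc1' f]; exact decide_eq_true this
        exact hfa (of_decide_eq_true h1)
      have e2 : ∀ f : ↥(S ∩ Λ₁), decide ((f : Λ) < b) = y.2 f := by
        intro f
        rw [ha2 f]
        refine decide_eq_decide.mpr ⟨fun h => ?_, fun h => lt_of_lt_of_le h hab⟩
        by_contra hfa
        have : (f : Λ) < c := lt_of_lt_of_le h hbc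
        have h1 : decide ((f : Λ) < a) = true := by
          rw [← ha2 f, hc2' f]; exact decide_eq_true this
        exact hfa (of_decide_eq_true h1)
      exact Prod.ext (funext fun f => e1 f) (funext fun f => e2 f)
    obtain ⟨z, hzT, hz1⟩ := hc1 T (fun x hx => hS (hTS hx)) hTconv hTinf
    obtain ⟨hzS, hz1', hz2'⟩ := hmem z hzT
    set fz : ↥(S ∩ Λ₁) := ⟨z, hzS, hz1⟩ with hfz
    obtain ⟨w, hwT, hwz⟩ := (hTinf.diff (Set.finite_singleton z)).nonempty
    obtain ⟨hwS, hw1', hw2'⟩ := hmem w hwT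
    have hzw : z ≤ w := by
      have h0 : y.1 fz = true := by rw [hz1' fz]; exact decide_eq_true (le_refl z)
      have h2 : decide ((fz : Λ) ≤ w) = true := by rw [← hw1' fz, h0]
      exact of_decide_eq_true h2
    have hwznlt : ¬ z < w := by
      intro h
      have h0 : y.2 fz = true := by rw [hw2' fz]; exact decide_eq_true h
      rw [hz2' fz] at h0
      exact lt_irrefl z (of_decide_eq_true h0)
    exact hwz (le_antisymm (not_lt.mp hwznlt) hzw)
  obtain ⟨t, htF, ht2⟩ := hc2 (S ∩ Λ₁) hFsub hFconv hFinf
  exact ⟨t, htF.1, ht2⟩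
end

section
/- Suppose {Y_n}_{n∈ω} is a collection of nonempty finite subsets of ℚ whose pairwise disjoint union is all of ℚ. Then there exists a family {N_k}_{k∈ω} of pairwise disjoint infinite subsets of ω with ⋃_{k∈ω} N_k = ω such that for each k ∈ ω the set ⋃_{n∈N_k} Y_n is dense in ℚ. -/
open Set

noncomputable def seqAux (P : ℕ → Set ℕ) : ℕ → ℕ
  | i => sInf (P i \ {m | ∃ j, ∃ _ : j < i, seqAux P j = m})
  termination_by i => i

lemma seqAux_mem (P : ℕ → Set ℕ) (hP : ∀ i, (P i).Infinite) (i : ℕ) :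
    seqAux P i ∈ P i \ {m | ∃ j, ∃ _ : j < i, seqAux P j = m} := by
  rw [seqAux]
  apply Nat.sInf_mem
  have hfin : {m | ∃ j, ∃ _ : j < i, seqAux P j = m}.Finite := by
    have hsub : {m | ∃ j, ∃ _ : j < i, seqAux P j = m} ⊆ (fun j => seqAux P j) '' (Set.Iio i) := by
      rintro m ⟨j, hj, rfl⟩; exact ⟨j, hj, rfl⟩
    exact ((Set.finite_Iio i).image _).subset hsub
  exact ((hP i).diff hfin).nonempty

/-- **Lemma.** If `{Y n}` is a collection of nonempty finite subsets of `ℚ` whose pairwise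
disjoint union is all of `ℚ`, then `ω` can be partitioned into infinitely many pairwise
disjoint infinite sets `N k` with `⋃_{n ∈ N k} Y n` dense in `ℚ` (every nonempty open
interval of `ℚ` contains a point of it) for every `k`. -/
theorem exists_partition_dense_pieces
    (Y : ℕ → Set ℚ)
    (hne : ∀ n, (Y n).Nonempty) (hfin : ∀ n, (Y n).Finite)
    (hdisj : ∀ m n, m ≠ n → Disjoint (Y m) (Y n))
    (hcover : (⋃ n, Y n) = Set.univ) :
    ∃ N : ℕ → Set ℕ,
      (∀ j k, j ≠ k → Disjoint (N j) (N k)) ∧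
      (⋃ k, N k) = Set.univ ∧
      (∀ k, (N k).Infinite) ∧
      (∀ k, ∀ a b : ℚ, a < b → (Set.Ioo a b ∩ ⋃ n ∈ N k, Y n).Nonempty) := by
  classical
  letI : Denumerable ℚ := Denumerable.ofEncodableOfInfinite ℚ
  set e : ℕ ≃ ℕ × ℚ × ℚ := (Denumerable.eqv (ℕ × ℚ × ℚ)).symm with he
  set P : ℕ → Set ℕ := fun i =>
    if (e i).2.1 < (e i).2.2 then {n | (Set.Ioo (e i).2.1 (e i).2.2 ∩ Y n).Nonempty}
    else Set.univ with hPdef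
  have hPinf : ∀ i, (P i).Infinite := by
    intro i
    by_cases h : (e i).2.1 < (e i).2.2
    · simp only [hPdef, if_pos h]
      by_contra hfin'
      rw [Set.not_infinite] at hfin'
      have hsub : Set.Ioo (e i).2.1 (e i).2.2 ⊆
          ⋃ n ∈ {n | (Set.Ioo (e i).2.1 (e i).2.2 ∩ Y n).Nonempty}, Y n := by
        intro x hx
        have hx2 : x ∈ ⋃ n, Y n := by rw [hcover]; trivial
        obtain ⟨n, hn⟩ := Set.mem_iUnion.1 hx2
        exact Set.mem_biUnion ⟨x, hx, hn⟩ hn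
      have hIf : (Set.Ioo (e i).2.1 (e i).2.2).Finite :=
        (hfin'.biUnion fun n _ => hfin n).subset hsub
      exact (Set.Ioo_infinite h) hIf
    · simp only [hPdef, if_neg h]
      exact Set.infinite_univ
  set f : ℕ → ℕ := seqAux P with hfdef
  have hmem := fun i => seqAux_mem P hPinf i
  have hinj : Function.Injective f := by
    intro i j hij
    by_contra hne'
    rcases Nat.lt_or_ge i j with h | h
    · exact (hmem j).2 ⟨i, h, hij⟩
    · exact (hmem i).2 ⟨j, lt_of_le_of_ne h (Ne.symm hne'), hij.symm⟩
  set c : ℕ → ℕ := fun n => if h : ∃ i, f i = n then (e h.choose).1 else 0 with hcdef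
  have hc : ∀ i, c (f i) = (e i).1 := by
    intro i
    have h : ∃ i', f i' = f i := ⟨i, rfl⟩
    simp only [hcdef, dif_pos h]
    rw [hinj h.choose_spec]
  refine ⟨fun k => c ⁻¹' {k}, ?_, ?_, ?_, ?_⟩
  · intro j k hjk
    rw [Set.disjoint_left]
    rintro n hj hk
    exact hjk (hj.symm.trans hk)
  · ext n
    simp only [Set.mem_iUnion, Set.mem_preimage, Set.mem_singleton_iff, Set.mem_univ, iff_true]
    exact ⟨c n, rfl⟩
  · intro k
    have h1 : {i | (e i).1 = k}.Infinite := by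
      apply Set.infinite_of_injective_forall_mem
        (f := fun m : ℕ => e.symm (k, (m : ℚ), 0))
      · intro m m' hmm'
        have := e.symm.injective hmm'
        exact Nat.cast_injective (congrArg (fun p : ℕ × ℚ × ℚ => p.2.1) this)
      · intro m
        simp [Set.mem_setOf_eq]
    have h2 : (f '' {i | (e i).1 = k}).Infinite := h1.image (hinj.injOn)
    apply h2.mono
    rintro _ ⟨i, hi, rfl⟩
    simpa [Set.mem_preimage, hc i] using hi
  · intro k a b hab
    obtain ⟨i, hei⟩ : ∃ i, e i = (k, a, b) := ⟨e.symm (k, a, b), e.apply_symm_apply _⟩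
    have hPi : P i = {n | (Set.Ioo a b ∩ Y n).Nonempty} := by
      simp only [hPdef, hei]
      exact if_pos hab
    have hfi : f i ∈ P i := (hmem i).1
    rw [hPi] at hfi
    obtain ⟨x, hx1, hx2⟩ := hfi
    refine ⟨x, hx1, ?_⟩
    apply Set.mem_biUnion _ hx2
    show c (f i) = k
    rw [hc i, hei]
end
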